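/- arXiv:2410.06807 — 3 statements merged into one kernel-verified Lean document; each statement's English description precedes it below -/
import Mathlib

section
/- Suppose M > 0. For every vertex v ∈ V and every time t ≥ 0, the occupancy process started at x(0) and the deterministic process started at x(0) satisfy E|X_{N_v}(t) − x_{N_v}(t)| ≤ M^{−1}((M+1)^t − 1) · δ(G)^{−1/2}, where δ(G) = min_{v∈V} deg v is the minimum degree of G. -/
/-!
Conditionally on `X(t)`, the coordinates of `X(t+1)` are independent Bernoulli variables with
means `γ(X_v(t), X_{N_v}(t))`, so by a second-moment bound a weighted neighbourhood average of
`X(t+1)` is within `(deg v)^{-1/2}` of its conditional mean in `L¹`. That conditional mean differs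
from the deterministic update by the previous error weighted by `∂γ/∂a = 1 - f - g` (of modulus
at most `1`) plus `M` times neighbourhood averages of previous errors. Hence the `L¹` error `ε_t`
of neighbourhood averages with arbitrary weights in `[-1, 1]` satisfies `ε_0 = 0` and
`ε_{t+1} ≤ δ^{-1/2} + (M + 1) ε_t`; the weights must be carried through the induction because
the propagated error is reweighted by `1 - f - g` at every step.
-/

open MeasureTheory Finset

noncomputable section

/-- Real value of a Boolean state. -/
def b2r (b : Bool) : ℝ := if b then 1 else 0

/-- Neighborhood average `y_{N_v} = (deg v)⁻¹ ∑_{w ∈ N_v} y_w`. -/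
def nbrAvg {V : Type} [Fintype V] (G : SimpleGraph V) [DecidableRel G.Adj]
    (y : V → ℝ) (v : V) : ℝ :=
  (∑ w ∈ G.neighborFinset v, y w) / (G.degree v : ℝ)

/-- `γ(a,b) = a(1 - f(b)) + (1 - a) g(b)`. -/
def gam (f g : ℝ → ℝ) (a b : ℝ) : ℝ := a * (1 - f b) + (1 - a) * g b

/-- One-step transition measure of the occupancy process: from state `X`, the
coordinates of the next state are independent Bernoulli with success
probability `γ(X_v, X_{N_v})`; this is the corresponding product measure on
`V → Bool`, written out by its mass function. -/
def stepMeasure {V : Type} [Fintype V] [DecidableEq V] (G : SimpleGraph V)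
    [DecidableRel G.Adj] (f g : ℝ → ℝ) (X : V → Bool) : Measure (V → Bool) :=
  ∑ y : V → Bool,
    ENNReal.ofReal (∏ v,
        (if y v then gam f g (b2r (X v)) (nbrAvg G (fun w => b2r (X w)) v)
         else 1 - gam f g (b2r (X v)) (nbrAvg G (fun w => b2r (X w)) v)))
      • Measure.dirac y

/-- Law of the occupancy process at time `t`, started (a.s.) at `x0`. -/
def law {V : Type} [Fintype V] [DecidableEq V] (G : SimpleGraph V)
    [DecidableRel G.Adj] (f g : ℝ → ℝ) (x0 : V → Bool) : ℕ → Measure (V → Bool)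
  | 0 => Measure.dirac x0
  | t + 1 => (law G f g x0 t).bind (stepMeasure G f g)

/-- The deterministic process `x(t+1)_v = γ(x(t)_v, x(t)_{N_v})`. -/
def det {V : Type} [Fintype V] (G : SimpleGraph V) [DecidableRel G.Adj]
    (f g : ℝ → ℝ) (x0 : V → ℝ) : ℕ → V → ℝ
  | 0 => x0
  | t + 1 => fun v => gam f g (det G f g x0 t v) (nbrAvg G (det G f g x0 t) v)

theorem b2r_mem_Icc (b : Bool) : b2r b ∈ Set.Icc (0:ℝ) 1 := by
  cases b <;> simp [b2r]

@[simp] theorem b2r_true : b2r true = 1 := rfl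

@[simp] theorem b2r_false : b2r false = 0 := rfl

theorem sum_mul_abs_le_sqrt_sum_mul_sq {ι : Type*} (s : Finset ι) {q Z : ι → ℝ}
    (hq : ∀ i, 0 ≤ q i) (hq1 : ∑ i ∈ s, q i = 1) :
    ∑ i ∈ s, q i * |Z i| ≤ √(∑ i ∈ s, q i * Z i ^ 2) := by
  have h := Real.sum_sqrt_mul_sqrt_le s (f := q) (g := fun i => q i * Z i ^ 2) hq
    (fun i => mul_nonneg (hq i) (sq_nonneg _))
  rw [hq1, Real.sqrt_one, one_mul] at h
  refine le_of_eq_of_le (sum_congr rfl fun i _ => ?_) h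
  rw [Real.sqrt_mul (hq i), Real.sqrt_sq_eq_abs, ← mul_assoc, Real.mul_self_sqrt (hq i)]

section Bernoulli

variable {ι : Type*} [Fintype ι] (p : ι → ℝ)

def bernoulliMass (y : ι → Bool) : ℝ := ∏ i, if y i then p i else 1 - p i

theorem bernoulliMass_nonneg {p : ι → ℝ} (hp : ∀ i, p i ∈ Set.Icc (0:ℝ) 1) (y : ι → Bool) :
    0 ≤ bernoulliMass p y :=
  prod_nonneg fun i _ => by have := hp i; split <;> simp_all

theorem sum_bernoulliMass_mul_prod [DecidableEq ι] (S : Finset ι) (F : ι → Bool → ℝ) :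
    ∑ y, bernoulliMass p y * ∏ i ∈ S, F i (y i)
      = ∏ i ∈ S, (p i * F i true + (1 - p i) * F i false) := by
  have h : ∀ y : ι → Bool, bernoulliMass p y * ∏ i ∈ S, F i (y i)
      = ∏ i, (if y i then p i else 1 - p i) * (if i ∈ S then F i (y i) else 1) := by
    intro y
    rw [prod_mul_distrib, Fintype.prod_ite_mem, bernoulliMass]
  rw [sum_congr rfl fun y _ => h y, ← Fintype.prod_sum fun i b =>
    (if b then p i else 1 - p i) * (if i ∈ S then F i b else 1), ← Fintype.prod_ite_mem S]
  refine prod_congr rfl fun i _ => ?_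
  by_cases hi : i ∈ S <;> simp [hi]

theorem sum_bernoulliMass [DecidableEq ι] : ∑ y, bernoulliMass p y = 1 := by
  simpa using sum_bernoulliMass_mul_prod p ∅ fun _ _ => 1

theorem sum_bernoulliMass_mul_sq [DecidableEq ι] (S : Finset ι) (d : ι → ℝ) :
    ∑ y, bernoulliMass p y * (∑ i ∈ S, d i * (b2r (y i) - p i)) ^ 2
      = ∑ i ∈ S, d i ^ 2 * (p i * (1 - p i)) := by
  let Z : ι → Bool → ℝ := fun i b => d i * (b2r b - p i)
  have hsq : ∀ y : ι → Bool, (∑ i ∈ S, d i * (b2r (y i) - p i)) ^ 2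
      = ∑ i ∈ S, ∑ j ∈ S, Z i (y i) * Z j (y j) := fun y => by rw [sq, sum_mul_sum]
  simp_rw [hsq, mul_sum]
  rw [sum_comm]
  refine sum_congr rfl fun i hi => ?_
  rw [sum_comm, sum_eq_single i (fun j _ hji => ?_) (absurd hi)]
  · have h := sum_bernoulliMass_mul_prod p {i} fun k b => Z k b * Z k b
    simp only [prod_singleton] at h
    rw [h]
    simp only [Z, b2r_true, b2r_false]
    ring
  · have h := sum_bernoulliMass_mul_prod p {i, j} Z
    simp only [prod_pair hji.symm] at h
    rw [h]
    simp only [Z, b2r_true, b2r_false]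
    ring

theorem sum_bernoulliMass_mul_abs_le [DecidableEq ι] {p : ι → ℝ}
    (hp : ∀ i, p i ∈ Set.Icc (0:ℝ) 1) (S : Finset ι) (d : ι → ℝ) :
    ∑ y, bernoulliMass p y * |∑ i ∈ S, d i * (b2r (y i) - p i)| ≤ √(∑ i ∈ S, d i ^ 2) := by
  refine (sum_mul_abs_le_sqrt_sum_mul_sq univ (bernoulliMass_nonneg hp)
    (sum_bernoulliMass p)).trans (Real.sqrt_le_sqrt ?_)
  rw [sum_bernoulliMass_mul_sq]
  refine sum_le_sum fun i _ => ?_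
  obtain ⟨h0, h1⟩ := hp i
  exact mul_le_of_le_one_right (sq_nonneg _) (by nlinarith)

end Bernoulli

section NbrAvg

variable {V : Type} [Fintype V] (G : SimpleGraph V) [DecidableRel G.Adj]

theorem nbrAvg_add (y z : V → ℝ) (v : V) :
    nbrAvg G (fun w => y w + z w) v = nbrAvg G y v + nbrAvg G z v := by
  simp only [nbrAvg, sum_add_distrib, add_div]

theorem nbrAvg_sub (y z : V → ℝ) (v : V) :
    nbrAvg G (fun w => y w - z w) v = nbrAvg G y v - nbrAvg G z v := by
  simp only [nbrAvg, sum_sub_distrib, sub_div]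

theorem nbrAvg_const_mul (a : ℝ) (y : V → ℝ) (v : V) :
    nbrAvg G (fun w => a * y w) v = a * nbrAvg G y v := by
  simp only [nbrAvg, ← mul_sum, mul_div_assoc]

theorem nbrAvg_const {v : V} (hv : 0 < G.degree v) (a : ℝ) : nbrAvg G (fun _ => a) v = a := by
  rw [nbrAvg, sum_const, nsmul_eq_mul, SimpleGraph.card_neighborFinset_eq_degree,
    mul_div_cancel_left₀ _ (by positivity)]

theorem nbrAvg_mono {y z : V → ℝ} (h : ∀ w, y w ≤ z w) (v : V) : nbrAvg G y v ≤ nbrAvg G z v :=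
  div_le_div_of_nonneg_right (sum_le_sum fun w _ => h w) (Nat.cast_nonneg _)

theorem abs_nbrAvg_le (y : V → ℝ) (v : V) : |nbrAvg G y v| ≤ nbrAvg G (fun w => |y w|) v := by
  rw [nbrAvg, abs_div, Nat.abs_cast]
  exact div_le_div_of_nonneg_right (abs_sum_le_sum_abs _ _) (Nat.cast_nonneg _)

theorem sum_mul_nbrAvg {α : Type*} (s : Finset α) (q : α → ℝ) (F : α → V → ℝ) (v : V) :
    ∑ x ∈ s, q x * nbrAvg G (F x) v = nbrAvg G (fun w => ∑ x ∈ s, q x * F x w) v := by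
  simp only [nbrAvg, mul_div_assoc', ← sum_div, mul_sum]
  rw [sum_comm]

theorem nbrAvg_mem_Icc {v : V} (hv : 0 < G.degree v) {y : V → ℝ}
    (hy : ∀ w, y w ∈ Set.Icc (0:ℝ) 1) : nbrAvg G y v ∈ Set.Icc (0:ℝ) 1 :=
  ⟨nbrAvg_const G hv 0 ▸ nbrAvg_mono G (fun w => (hy w).1) v,
    nbrAvg_const G hv 1 ▸ nbrAvg_mono G (fun w => (hy w).2) v⟩

end NbrAvg

section Gam

variable {f g : ℝ → ℝ}

theorem gam_mem_Icc (hf : Set.MapsTo f (Set.Icc 0 1) (Set.Icc 0 1))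
    (hg : Set.MapsTo g (Set.Icc 0 1) (Set.Icc 0 1))
    {a b : ℝ} (ha : a ∈ Set.Icc (0:ℝ) 1) (hb : b ∈ Set.Icc (0:ℝ) 1) :
    gam f g a b ∈ Set.Icc (0:ℝ) 1 := by
  obtain ⟨hf0, hf1⟩ := hf hb
  obtain ⟨hg0, hg1⟩ := hg hb
  obtain ⟨ha0, ha1⟩ := ha
  constructor <;> simp only [gam] <;> nlinarith

theorem abs_one_sub_sub_le (hf : Set.MapsTo f (Set.Icc 0 1) (Set.Icc 0 1))
    (hg : Set.MapsTo g (Set.Icc 0 1) (Set.Icc 0 1)) {b : ℝ} (hb : b ∈ Set.Icc (0:ℝ) 1) :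
    |1 - f b - g b| ≤ 1 := by
  obtain ⟨hf0, hf1⟩ := hf hb
  obtain ⟨hg0, hg1⟩ := hg hb
  exact abs_le.2 ⟨by linarith, by linarith⟩

theorem abs_gam_sub_gam_sub_le {M : ℝ}
    (hfLip : ∀ a ∈ Set.Icc (0:ℝ) 1, ∀ b ∈ Set.Icc (0:ℝ) 1, |f a - f b| ≤ M * |a - b|)
    (hgLip : ∀ a ∈ Set.Icc (0:ℝ) 1, ∀ b ∈ Set.Icc (0:ℝ) 1, |g a - g b| ≤ M * |a - b|)
    {a a' b b' : ℝ} (ha : a ∈ Set.Icc (0:ℝ) 1) (hb : b ∈ Set.Icc (0:ℝ) 1)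
    (hb' : b' ∈ Set.Icc (0:ℝ) 1) :
    |gam f g a b - gam f g a' b' - (a - a') * (1 - f b' - g b')| ≤ M * |b - b'| := by
  have h : gam f g a b - gam f g a' b' - (a - a') * (1 - f b' - g b')
      = a * (f b' - f b) + (1 - a) * (g b - g b') := by
    simp only [gam]; ring
  obtain ⟨ha0, ha1⟩ := ha
  calc |gam f g a b - gam f g a' b' - (a - a') * (1 - f b' - g b')|
      ≤ a * |f b' - f b| + (1 - a) * |g b - g b'| := by
        rw [h]
        refine (abs_add_le _ _).trans_eq ?_
        rw [abs_mul, abs_mul, abs_of_nonneg ha0, abs_of_nonneg (sub_nonneg.2 ha1)]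
    _ ≤ a * (M * |b - b'|) + (1 - a) * (M * |b - b'|) := by
        gcongr
        · rw [abs_sub_comm b]; exact hfLip b' hb' b hb
        · exact hgLip b hb b' hb'
    _ = M * |b - b'| := by ring

end Gam

section OccupancyChain

variable {V : Type} [Fintype V] (G : SimpleGraph V) [DecidableRel G.Adj] (f g : ℝ → ℝ)

def stepProb (x : V → Bool) (v : V) : ℝ :=
  gam f g (b2r (x v)) (nbrAvg G (fun w => b2r (x w)) v)

variable {G f g}

theorem stepProb_mem_Icc (hdeg : ∀ v : V, 0 < G.degree v)
    (hf : Set.MapsTo f (Set.Icc 0 1) (Set.Icc 0 1))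
    (hg : Set.MapsTo g (Set.Icc 0 1) (Set.Icc 0 1)) (x : V → Bool) (v : V) :
    stepProb G f g x v ∈ Set.Icc (0:ℝ) 1 :=
  gam_mem_Icc hf hg (b2r_mem_Icc _) (nbrAvg_mem_Icc G (hdeg v) fun _ => b2r_mem_Icc _)

theorem det_mem_Icc (hdeg : ∀ v : V, 0 < G.degree v)
    (hf : Set.MapsTo f (Set.Icc 0 1) (Set.Icc 0 1))
    (hg : Set.MapsTo g (Set.Icc 0 1) (Set.Icc 0 1)) {x0 : V → ℝ}
    (hx0 : ∀ w, x0 w ∈ Set.Icc (0:ℝ) 1) (t : ℕ) (w : V) :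
    det G f g x0 t w ∈ Set.Icc (0:ℝ) 1 := by
  induction t generalizing w with
  | zero => exact hx0 w
  | succ t ih => exact gam_mem_Icc hf hg (ih w) (nbrAvg_mem_Icc G (hdeg w) ih)

theorem abs_nbrAvg_sub_gam_le {M : ℝ} (hdeg : ∀ v : V, 0 < G.degree v)
    (hfLip : ∀ a ∈ Set.Icc (0:ℝ) 1, ∀ b ∈ Set.Icc (0:ℝ) 1, |f a - f b| ≤ M * |a - b|)
    (hgLip : ∀ a ∈ Set.Icc (0:ℝ) 1, ∀ b ∈ Set.Icc (0:ℝ) 1, |g a - g b| ≤ M * |a - b|)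
    {z : V → ℝ} (hz : ∀ w, z w ∈ Set.Icc (0:ℝ) 1) (x y : V → Bool) {c : V → ℝ}
    (hc : ∀ w, |c w| ≤ 1) (v : V) :
    |nbrAvg G (fun w => c w * (b2r (y w) - gam f g (z w) (nbrAvg G z w))) v|
      ≤ |nbrAvg G (fun w => c w * (b2r (y w) - stepProb G f g x w)) v|
        + |nbrAvg G (fun w =>
            c w * (1 - f (nbrAvg G z w) - g (nbrAvg G z w)) * (b2r (x w) - z w)) v|
        + M * nbrAvg G (fun w => |nbrAvg G (fun u => b2r (x u) - z u) w|) v := by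
  set r : V → ℝ := fun w => stepProb G f g x w - gam f g (z w) (nbrAvg G z w)
    - (b2r (x w) - z w) * (1 - f (nbrAvg G z w) - g (nbrAvg G z w))
  have hsplit : nbrAvg G (fun w => c w * (b2r (y w) - gam f g (z w) (nbrAvg G z w))) v
      = nbrAvg G (fun w => c w * (b2r (y w) - stepProb G f g x w)) v
        + nbrAvg G (fun w => c w * (1 - f (nbrAvg G z w) - g (nbrAvg G z w)) * (b2r (x w) - z w)) v
        + nbrAvg G (fun w => c w * r w) v := by
    rw [← nbrAvg_add, ← nbrAvg_add]
    congr 1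
    funext w
    ring
  have hr : ∀ w, |c w * r w| ≤ M * |nbrAvg G (fun u => b2r (x u) - z u) w| := by
    intro w
    rw [abs_mul, nbrAvg_sub]
    exact (mul_le_of_le_one_left (abs_nonneg _) (hc w)).trans <|
      abs_gam_sub_gam_sub_le hfLip hgLip (b2r_mem_Icc _)
        (nbrAvg_mem_Icc G (hdeg w) fun _ => b2r_mem_Icc _) (nbrAvg_mem_Icc G (hdeg w) hz)
  rw [hsplit]
  refine (abs_add_three _ _ _).trans (add_le_add_right ?_ _)
  calc |nbrAvg G (fun w => c w * r w) v|
      ≤ nbrAvg G (fun w => M * |nbrAvg G (fun u => b2r (x u) - z u) w|) v :=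
        (abs_nbrAvg_le G _ v).trans (nbrAvg_mono G hr v)
    _ = _ := nbrAvg_const_mul G _ _ v

variable [DecidableEq V] (G f g)

theorem stepMeasure_eq_sum_dirac (x : V → Bool) :
    stepMeasure G f g x
      = ∑ y, ENNReal.ofReal (bernoulliMass (stepProb G f g x) y) • Measure.dirac y :=
  rfl

def lawMass (x0 : V → Bool) : ℕ → (V → Bool) → ℝ
  | 0 => fun y => if y = x0 then 1 else 0
  | t + 1 => fun y => ∑ x, lawMass x0 t x * bernoulliMass (stepProb G f g x) y

theorem sum_lawMass_succ_mul (x0 : V → Bool) (t : ℕ) (h : (V → Bool) → ℝ) :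
    ∑ y, lawMass G f g x0 (t + 1) y * h y
      = ∑ x, lawMass G f g x0 t x * ∑ y, bernoulliMass (stepProb G f g x) y * h y := by
  simp only [lawMass, sum_mul, mul_sum, mul_assoc]
  exact sum_comm

theorem sum_lawMass (x0 : V → Bool) (t : ℕ) : ∑ y, lawMass G f g x0 t y = 1 := by
  induction t with
  | zero => simp [lawMass]
  | succ t ih =>
    simpa [sum_bernoulliMass, ih] using sum_lawMass_succ_mul G f g x0 t fun _ => 1

variable {G f g} (hp : ∀ x v, stepProb G f g x v ∈ Set.Icc (0:ℝ) 1)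
include hp

theorem lawMass_nonneg (x0 : V → Bool) (t : ℕ) (y : V → Bool) : 0 ≤ lawMass G f g x0 t y := by
  induction t generalizing y with
  | zero => simp only [lawMass]; split <;> norm_num
  | succ t ih => exact sum_nonneg fun x _ => mul_nonneg (ih x) (bernoulliMass_nonneg (hp x) y)

theorem law_eq_sum_dirac (x0 : V → Bool) (t : ℕ) :
    law G f g x0 t = ∑ y, ENNReal.ofReal (lawMass G f g x0 t y) • Measure.dirac y := by
  induction t with
  | zero => simp [law, lawMass, apply_ite ENNReal.ofReal, ite_smul]
  | succ t ih =>
    refine Measure.ext fun s hs => ?_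
    rw [law, Measure.bind_apply hs (measurable_of_countable _).aemeasurable, ih,
      lintegral_finsetSum_measure]
    simp only [lintegral_smul_measure, lintegral_dirac, stepMeasure_eq_sum_dirac,
      Measure.coe_finsetSum, Finset.sum_apply, Measure.smul_apply, smul_eq_mul, lawMass, mul_sum]
    rw [sum_comm]
    refine sum_congr rfl fun y _ => ?_
    rw [ENNReal.ofReal_sum_of_nonneg fun x _ =>
      mul_nonneg (lawMass_nonneg hp x0 t x) (bernoulliMass_nonneg (hp x) y), sum_mul]
    refine sum_congr rfl fun x _ => ?_
    rw [ENNReal.ofReal_mul (lawMass_nonneg hp x0 t x), mul_assoc]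

theorem integral_law (x0 : V → Bool) (t : ℕ) (h : (V → Bool) → ℝ) :
    ∫ y, h y ∂law G f g x0 t = ∑ y, lawMass G f g x0 t y * h y := by
  rw [law_eq_sum_dirac hp,
    integral_finsetSum_measure fun y _ => Integrable.of_finite.smul_measure ENNReal.ofReal_ne_top]
  refine sum_congr rfl fun y _ => ?_
  rw [integral_smul_measure, integral_dirac,
    ENNReal.toReal_ofReal (lawMass_nonneg hp x0 t y), smul_eq_mul]

end OccupancyChain

section Concentration

variable {V : Type} [Fintype V] [DecidableEq V] {G : SimpleGraph V} [DecidableRel G.Adj]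
  {f g : ℝ → ℝ} {δ : ℝ}

theorem sum_bernoulliMass_mul_abs_nbrAvg_le (hδ : 0 < δ) {v : V} (hδv : δ ≤ G.degree v)
    {p : V → ℝ} (hp : ∀ w, p w ∈ Set.Icc (0:ℝ) 1) {c : V → ℝ} (hc : ∀ w, |c w| ≤ 1) :
    ∑ y, bernoulliMass p y * |nbrAvg G (fun w => c w * (b2r (y w) - p w)) v| ≤ (√δ)⁻¹ := by
  have hv : (0:ℝ) < G.degree v := hδ.trans_le hδv
  have h := sum_bernoulliMass_mul_abs_le hp (G.neighborFinset v) fun w => c w / G.degree v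
  simp only [div_mul_eq_mul_div, ← sum_div] at h
  refine h.trans ?_
  rw [← Real.sqrt_inv]
  refine Real.sqrt_le_sqrt ?_
  calc ∑ w ∈ G.neighborFinset v, (c w / G.degree v) ^ 2
      ≤ ∑ _w ∈ G.neighborFinset v, (1 / (G.degree v : ℝ)) ^ 2 := by
        refine sum_le_sum fun w _ => ?_
        rw [div_pow, div_pow, one_pow]
        exact div_le_div_of_nonneg_right ((sq_le_one_iff_abs_le_one _).2 (hc w)) (sq_nonneg _)
    _ = (G.degree v : ℝ)⁻¹ := by
        rw [sum_const, nsmul_eq_mul, SimpleGraph.card_neighborFinset_eq_degree]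
        field_simp
    _ ≤ δ⁻¹ := inv_anti₀ hδ hδv

theorem sum_bernoulliMass_mul_abs_nbrAvg_sub_gam_le {M : ℝ} (hδ : 0 < δ)
    (hδdeg : ∀ v : V, δ ≤ G.degree v)
    (hf : Set.MapsTo f (Set.Icc 0 1) (Set.Icc 0 1))
    (hg : Set.MapsTo g (Set.Icc 0 1) (Set.Icc 0 1))
    (hfLip : ∀ a ∈ Set.Icc (0:ℝ) 1, ∀ b ∈ Set.Icc (0:ℝ) 1, |f a - f b| ≤ M * |a - b|)
    (hgLip : ∀ a ∈ Set.Icc (0:ℝ) 1, ∀ b ∈ Set.Icc (0:ℝ) 1, |g a - g b| ≤ M * |a - b|)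
    {z : V → ℝ} (hz : ∀ w, z w ∈ Set.Icc (0:ℝ) 1) (x : V → Bool) {c : V → ℝ}
    (hc : ∀ w, |c w| ≤ 1) (v : V) :
    ∑ y, bernoulliMass (stepProb G f g x) y
        * |nbrAvg G (fun w => c w * (b2r (y w) - gam f g (z w) (nbrAvg G z w))) v|
      ≤ (√δ)⁻¹
        + |nbrAvg G (fun w =>
            c w * (1 - f (nbrAvg G z w) - g (nbrAvg G z w)) * (b2r (x w) - z w)) v|
        + M * nbrAvg G (fun w => |nbrAvg G (fun u => b2r (x u) - z u) w|) v := by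
  have hdeg : ∀ v : V, 0 < G.degree v := fun v => by exact_mod_cast hδ.trans_le (hδdeg v)
  have hp := stepProb_mem_Icc hdeg hf hg x
  set drift := |nbrAvg G (fun w => c w * (1 - f (nbrAvg G z w) - g (nbrAvg G z w))
      * (b2r (x w) - z w)) v| + M * nbrAvg G (fun w => |nbrAvg G (fun u => b2r (x u) - z u) w|) v
  calc _ ≤ ∑ y, bernoulliMass (stepProb G f g x) y
          * (|nbrAvg G (fun w => c w * (b2r (y w) - stepProb G f g x w)) v| + drift) :=
        sum_le_sum fun y _ => mul_le_mul_of_nonneg_left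
          ((abs_nbrAvg_sub_gam_le hdeg hfLip hgLip hz x y hc v).trans_eq (add_assoc _ _ _))
          (bernoulliMass_nonneg hp y)
    _ = ∑ y, bernoulliMass (stepProb G f g x) y
          * |nbrAvg G (fun w => c w * (b2r (y w) - stepProb G f g x w)) v| + drift := by
        simp only [mul_add, sum_add_distrib, ← sum_mul, sum_bernoulliMass, one_mul]
    _ ≤ (√δ)⁻¹ + drift := by
        gcongr
        exact sum_bernoulliMass_mul_abs_nbrAvg_le hδ (hδdeg v) hp hc
    _ = _ := (add_assoc _ _ _).symm

theorem sum_lawMass_mul_abs_nbrAvg_sub_det_le {M : ℝ} (hM : 0 < M) (hδ : 0 < δ)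
    (hδdeg : ∀ v : V, δ ≤ G.degree v)
    (hf : Set.MapsTo f (Set.Icc 0 1) (Set.Icc 0 1))
    (hg : Set.MapsTo g (Set.Icc 0 1) (Set.Icc 0 1))
    (hfLip : ∀ a ∈ Set.Icc (0:ℝ) 1, ∀ b ∈ Set.Icc (0:ℝ) 1, |f a - f b| ≤ M * |a - b|)
    (hgLip : ∀ a ∈ Set.Icc (0:ℝ) 1, ∀ b ∈ Set.Icc (0:ℝ) 1, |g a - g b| ≤ M * |a - b|)
    (x0 : V → Bool) (t : ℕ) {c : V → ℝ} (hc : ∀ w, |c w| ≤ 1) (v : V) :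
    ∑ y, lawMass G f g x0 t y
        * |nbrAvg G (fun w => c w * (b2r (y w) - det G f g (fun u => b2r (x0 u)) t w)) v|
      ≤ M⁻¹ * ((M + 1) ^ t - 1) * (√δ)⁻¹ := by
  have hdeg : ∀ v : V, 0 < G.degree v := fun v => by exact_mod_cast hδ.trans_le (hδdeg v)
  induction t generalizing c v with
  | zero => simp [lawMass, det, nbrAvg]
  | succ t ih =>
    set z := det G f g (fun u => b2r (x0 u)) t
    have hz := det_mem_Icc hdeg hf hg (fun u => b2r_mem_Icc (x0 u)) t
    set ε := M⁻¹ * ((M + 1) ^ t - 1) * (√δ)⁻¹ with hε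
    have hprop := ih (c := fun w => c w * (1 - f (nbrAvg G z w) - g (nbrAvg G z w)))
      (fun w => by
        rw [abs_mul]
        exact mul_le_one₀ (hc w) (abs_nonneg _)
          (abs_one_sub_sub_le hf hg (nbrAvg_mem_Icc G (hdeg w) hz))) v
    have hlip : ∀ w, ∑ x, lawMass G f g x0 t x * |nbrAvg G (fun u => b2r (x u) - z u) w| ≤ ε :=
      fun w => by simpa using ih (c := fun _ => 1) (by simp) w
    calc _ = ∑ x, lawMass G f g x0 t x * ∑ y, bernoulliMass (stepProb G f g x) y
            * |nbrAvg G (fun w => c w * (b2r (y w) - gam f g (z w) (nbrAvg G z w))) v| :=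
          sum_lawMass_succ_mul G f g x0 t _
      _ ≤ ∑ x, lawMass G f g x0 t x * ((√δ)⁻¹
            + |nbrAvg G (fun w => c w * (1 - f (nbrAvg G z w) - g (nbrAvg G z w))
                * (b2r (x w) - z w)) v|
            + M * nbrAvg G (fun w => |nbrAvg G (fun u => b2r (x u) - z u) w|) v) :=
          sum_le_sum fun x _ => mul_le_mul_of_nonneg_left
            (sum_bernoulliMass_mul_abs_nbrAvg_sub_gam_le hδ hδdeg hf hg hfLip hgLip hz x hc v)
            (lawMass_nonneg (stepProb_mem_Icc hdeg hf hg) x0 t x)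
      _ = (√δ)⁻¹
            + ∑ x, lawMass G f g x0 t x * |nbrAvg G (fun w => c w
                * (1 - f (nbrAvg G z w) - g (nbrAvg G z w)) * (b2r (x w) - z w)) v|
            + M * nbrAvg G (fun w => ∑ x, lawMass G f g x0 t x
                * |nbrAvg G (fun u => b2r (x u) - z u) w|) v := by
          simp only [mul_add, sum_add_distrib, ← sum_mul, sum_lawMass, one_mul, mul_left_comm _ M,
            ← mul_sum, sum_mul_nbrAvg]
      _ ≤ (√δ)⁻¹ + ε + M * ε := by
          gcongr
          exact (nbrAvg_mono G hlip v).trans_eq (nbrAvg_const G (hdeg v) ε)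
      _ = M⁻¹ * ((M + 1) ^ (t + 1) - 1) * (√δ)⁻¹ := by
          rw [hε]
          field_simp
          ring

end Concentration

/-- **Simplified concentration bound** in terms of the minimum degree `δ(G)`. -/
theorem concentration_min_degree
    {V : Type} [Fintype V] [DecidableEq V] [Nonempty V]
    (G : SimpleGraph V) [DecidableRel G.Adj]
    (hdeg : ∀ v : V, 0 < G.degree v)
    (f g : ℝ → ℝ) (M : ℝ) (hM : 0 < M)
    (hf01 : ∀ a ∈ Set.Icc (0:ℝ) 1, f a ∈ Set.Icc (0:ℝ) 1)
    (hg01 : ∀ a ∈ Set.Icc (0:ℝ) 1, g a ∈ Set.Icc (0:ℝ) 1)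
    (hfLip : ∀ a ∈ Set.Icc (0:ℝ) 1, ∀ b ∈ Set.Icc (0:ℝ) 1, |f a - f b| ≤ M * |a - b|)
    (hgLip : ∀ a ∈ Set.Icc (0:ℝ) 1, ∀ b ∈ Set.Icc (0:ℝ) 1, |g a - g b| ≤ M * |a - b|)
    (x0 : V → Bool) (v : V) (t : ℕ) :
    ∫ y, |nbrAvg G (fun w => b2r (y w)) v
          - nbrAvg G (det G f g (fun w => b2r (x0 w)) t) v| ∂ (law G f g x0 t)
      ≤ M⁻¹ * ((M + 1) ^ t - 1) *
          (Real.sqrt (Finset.univ.inf' Finset.univ_nonempty fun w : V => G.degree w))⁻¹ := by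
  have hδ : (0:ℝ) < (univ.inf' univ_nonempty fun w : V => G.degree w : ℕ) := by
    exact_mod_cast (lt_inf'_iff _).2 fun w _ => hdeg w
  have hδdeg : ∀ w : V, ((univ.inf' univ_nonempty fun w : V => G.degree w : ℕ) : ℝ) ≤ G.degree w :=
    fun w => by exact_mod_cast inf'_le _ (mem_univ w)
  rw [integral_law (stepProb_mem_Icc hdeg hf01 hg01)]
  simpa [nbrAvg_sub] using sum_lawMass_mul_abs_nbrAvg_sub_det_le hM hδ hδdeg hf01 hg01 hfLip hgLip
    x0 t (c := fun _ => 1) (by simp) v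

end
end

section
/- Let V be a finite set, let (Y_v)_{v∈V} be independent random variables each taking values in {0,1}, and let P be a d-homogeneous multilinear polynomial on ℝ^V. Then E|P(Y) − E P(Y)| ≤ 2 (Σ_{v∈V} c_v(P)²)^{1/2} = 2‖P‖₂. -/
/-!
Write `P(Y) = ∑_W Q_W Z_W` with the monomials `Z_W = ∏_{w ∈ W} Y_w ∈ [0,1]`. Then
`Var P(Y) = ∑_{W,W'} Q_W Q_{W'} Cov(Z_W, Z_{W'})`. Monomials on disjoint sets are independent,
hence uncorrelated, and any two `[0,1]`-valued variables have covariance at most `1` in absolute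
value, so `Var P(Y) ≤ ∑_{W,W'} |W ∩ W'| |Q_W| |Q_{W'}| = ∑_v c_v(P)²`. Finally
`E|P − E P| ≤ √(Var P)`, since the variance of `|P − E P|` is nonnegative.
-/

open MeasureTheory Finset

noncomputable section

/-- Value of the `d`-homogeneous multilinear polynomial with coefficients
`Q W` (over `d`-element subsets `W` of `V`) at the point `y`. -/
def polyVal {V : Type} [Fintype V] [DecidableEq V] (d : ℕ) (Q : Finset V → ℝ)
    (y : V → ℝ) : ℝ :=
  ∑ W ∈ Finset.powersetCard d (Finset.univ : Finset V), Q W * ∏ w ∈ W, y w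

/-- `c_v(P) = ∑_{W : v ∈ W} |P_W|`. -/
def cCoeff {V : Type} [Fintype V] [DecidableEq V] (d : ℕ) (Q : Finset V → ℝ)
    (v : V) : ℝ :=
  ∑ W ∈ (Finset.powersetCard d (Finset.univ : Finset V)).filter (fun W => v ∈ W), |Q W|

open ProbabilityTheory

section Moments

variable {Ω : Type*} [MeasurableSpace Ω] {μ : Measure Ω} [IsProbabilityMeasure μ]

lemma integral_mem_Icc_zero_one {X : Ω → ℝ} (hX : ∀ ω, X ω ∈ Set.Icc 0 1) :
    μ[X] ∈ Set.Icc 0 1 := by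
  by_cases hint : Integrable X μ
  · refine ⟨integral_nonneg fun ω => (hX ω).1, ?_⟩
    simpa using integral_mono hint (integrable_const 1) fun ω => (hX ω).2
  · simp [integral_undef hint]

lemma abs_covariance_le_one {X Y : Ω → ℝ} (hX : ∀ ω, X ω ∈ Set.Icc 0 1)
    (hY : ∀ ω, Y ω ∈ Set.Icc 0 1) : |cov[X, Y; μ]| ≤ 1 := by
  have hdev : ∀ {Z : Ω → ℝ}, (∀ ω, Z ω ∈ Set.Icc 0 1) → ∀ ω, |Z ω - μ[Z]| ≤ 1 :=
    fun hZ ω => abs_sub_le_of_nonneg_of_le (hZ ω).1 (hZ ω).2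
      (integral_mem_Icc_zero_one hZ).1 (integral_mem_Icc_zero_one hZ).2
  have h := norm_integral_le_of_norm_le_const (μ := μ) (C := 1)
    (f := fun ω => (X ω - μ[X]) * (Y ω - μ[Y])) <| Filter.Eventually.of_forall fun ω => by
      rw [Real.norm_eq_abs, abs_mul]
      exact mul_le_one₀ (hdev hX ω) (abs_nonneg _) (hdev hY ω)
  simpa [covariance] using h

lemma integral_abs_sub_integral_le_sqrt_variance {X : Ω → ℝ} (hX : MemLp X 2 μ) :
    ∫ ω, |X ω - μ[X]| ∂μ ≤ √(Var[X; μ]) := by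
  set D : Ω → ℝ := fun ω => |X ω - μ[X]|
  have hD : MemLp D 2 μ := (hX.sub (memLp_const _)).abs
  have hD_sq : μ[D ^ 2] = Var[X; μ] := by
    rw [variance_eq_integral hX.aemeasurable]
    simp [D, sq_abs]
  have hD_var := variance_nonneg D μ
  rw [variance_eq_sub hD, hD_sq, sub_nonneg] at hD_var
  exact Real.le_sqrt_of_sq_le hD_var

end Moments

lemma prod_mem_Icc_zero_one {ι : Type*} {x : ι → ℝ} (hx : ∀ i, x i ∈ Set.Icc 0 1)
    (S : Finset ι) : ∏ i ∈ S, x i ∈ Set.Icc 0 1 :=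
  ⟨prod_nonneg fun i _ => (hx i).1, prod_le_one (fun i _ => (hx i).1) fun i _ => (hx i).2⟩

section Monomials

variable {Ω ι : Type*} [MeasurableSpace Ω] {μ : Measure Ω} {f : ι → Ω → ℝ}

lemma memLp_prod_of_mem_Icc [IsFiniteMeasure μ] (hmeas : ∀ i, Measurable (f i))
    (hf : ∀ i ω, f i ω ∈ Set.Icc 0 1) (S : Finset ι) (p : ENNReal) :
    MemLp (fun ω => ∏ i ∈ S, f i ω) p μ :=
  memLp_of_bounded (Filter.Eventually.of_forall fun ω => prod_mem_Icc_zero_one (hf · ω) S)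
    (Finset.measurable_prod S fun i _ => hmeas i).aestronglyMeasurable p

lemma ProbabilityTheory.iIndepFun.indepFun_prod_of_disjoint (hind : iIndepFun f μ)
    (hmeas : ∀ i, Measurable (f i)) {S T : Finset ι} (hST : Disjoint S T) :
    IndepFun (fun ω => ∏ i ∈ S, f i ω) (fun ω => ∏ i ∈ T, f i ω) μ := by
  have h := (hind.indepFun_finset S T hST hmeas).comp
    (φ := fun x => ∏ i, x i) (ψ := fun x => ∏ i, x i)
    (Finset.measurable_prod _ fun i _ => measurable_pi_apply i)
    (Finset.measurable_prod _ fun i _ => measurable_pi_apply i)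
  convert h using 2 <;> exact (Finset.prod_coe_sort _ _).symm

lemma covariance_prod_prod_of_disjoint [IsProbabilityMeasure μ] (hind : iIndepFun f μ)
    (hmeas : ∀ i, Measurable (f i)) (hf : ∀ i ω, f i ω ∈ Set.Icc 0 1) {S T : Finset ι}
    (hST : Disjoint S T) :
    cov[fun ω => ∏ i ∈ S, f i ω, fun ω => ∏ i ∈ T, f i ω; μ] = 0 :=
  (hind.indepFun_prod_of_disjoint hmeas hST).covariance_eq_zero
    (memLp_prod_of_mem_Icc hmeas hf S 2) (memLp_prod_of_mem_Icc hmeas hf T 2)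

lemma covariance_prod_prod_le_card_inter [DecidableEq ι] [IsProbabilityMeasure μ]
    (hind : iIndepFun f μ) (hmeas : ∀ i, Measurable (f i)) (hf : ∀ i ω, f i ω ∈ Set.Icc 0 1)
    (S T : Finset ι) (a b : ℝ) :
    a * b * cov[fun ω => ∏ i ∈ S, f i ω, fun ω => ∏ i ∈ T, f i ω; μ]
      ≤ #(S ∩ T) * (|a| * |b|) := by
  by_cases hST : Disjoint S T
  · rw [covariance_prod_prod_of_disjoint hind hmeas hf hST, mul_zero]
    positivity
  · have hcard : (1 : ℝ) ≤ #(S ∩ T) :=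
      mod_cast Finset.card_pos.mpr (Finset.not_disjoint_iff_nonempty_inter.mp hST)
    calc a * b * cov[fun ω => ∏ i ∈ S, f i ω, fun ω => ∏ i ∈ T, f i ω; μ]
        ≤ |a| * |b| * |cov[fun ω => ∏ i ∈ S, f i ω, fun ω => ∏ i ∈ T, f i ω; μ]| := by
          rw [← abs_mul, ← abs_mul]; exact le_abs_self _
      _ ≤ |a| * |b| * 1 := by
          gcongr; exact abs_covariance_le_one (fun ω => prod_mem_Icc_zero_one (hf · ω) S)
            (fun ω => prod_mem_Icc_zero_one (hf · ω) T)
      _ ≤ #(S ∩ T) * (|a| * |b|) := by nlinarith [mul_nonneg (abs_nonneg a) (abs_nonneg b)]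

end Monomials

section Polynomial

variable {V : Type} [Fintype V] [DecidableEq V]

lemma sum_cCoeff_sq (d : ℕ) (Q : Finset V → ℝ) :
    ∑ v, cCoeff d Q v ^ 2 = ∑ W ∈ powersetCard d univ, ∑ W' ∈ powersetCard d univ,
      #(W ∩ W') * (|Q W| * |Q W'|) := by
  have hsq : ∀ v, cCoeff d Q v ^ 2 = ∑ W ∈ powersetCard d univ, ∑ W' ∈ powersetCard d univ,
      if v ∈ W ∩ W' then |Q W| * |Q W'| else 0 := fun v => by
    simp only [cCoeff, sum_filter, sq, sum_mul_sum, mem_inter, ite_zero_mul_ite_zero]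
  simp only [hsq]
  rw [sum_comm]
  refine sum_congr rfl fun W _ => ?_
  rw [sum_comm]
  refine sum_congr rfl fun W' _ => ?_
  rw [sum_ite_mem, univ_inter, sum_const, nsmul_eq_mul]

variable {Ω : Type*} [MeasurableSpace Ω] {μ : Measure Ω} [IsProbabilityMeasure μ]
  {f : V → Ω → ℝ}

lemma memLp_polyVal (hmeas : ∀ v, Measurable (f v)) (hf : ∀ v ω, f v ω ∈ Set.Icc 0 1) (d : ℕ)
    (Q : Finset V → ℝ) : MemLp (fun ω => polyVal d Q (f · ω)) 2 μ :=
  memLp_finsetSum _ fun W _ => (memLp_prod_of_mem_Icc hmeas hf W 2).const_mul (Q W)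

theorem variance_polyVal_le (hind : iIndepFun f μ) (hmeas : ∀ v, Measurable (f v))
    (hf : ∀ v ω, f v ω ∈ Set.Icc 0 1) (d : ℕ) (Q : Finset V → ℝ) :
    Var[fun ω => polyVal d Q (f · ω); μ] ≤ ∑ v, cCoeff d Q v ^ 2 := by
  rw [sum_cCoeff_sq]
  unfold polyVal
  rw [variance_fun_sum' fun W _ => (memLp_prod_of_mem_Icc hmeas hf W 2).const_mul (Q W)]
  gcongr with W _ W' _
  rw [covariance_const_mul_left, covariance_const_mul_right, ← mul_assoc]
  exact covariance_prod_prod_le_card_inter hind hmeas hf W W' (Q W) (Q W')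

end Polynomial

theorem mcdiarmid_l1_bound_general
    {V : Type} [Fintype V] [DecidableEq V]
    {Ω : Type} [MeasurableSpace Ω] (μ : Measure Ω) [IsProbabilityMeasure μ]
    (Y : V → Ω → Bool)
    (hmeas : ∀ v, Measurable (Y v))
    (hindep : ProbabilityTheory.iIndepFun Y μ)
    (d : ℕ) (Q : Finset V → ℝ) :
    ∫ ω, |polyVal d Q (fun v => b2r (Y v ω))
          - ∫ ω', polyVal d Q (fun v => b2r (Y v ω')) ∂ μ| ∂ μ
      ≤ 2 * Real.sqrt (∑ v, cCoeff d Q v ^ 2) := by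
  set f : V → Ω → ℝ := fun v ω => b2r (Y v ω)
  have hf_meas : ∀ v, Measurable (f v) := fun v =>
    (Measurable.of_discrete (f := b2r)).comp (hmeas v)
  have hf_ind : iIndepFun f μ := hindep.comp (fun _ => b2r) fun _ => Measurable.of_discrete
  have hf_mem : ∀ v ω, f v ω ∈ Set.Icc 0 1 := fun v ω => by
    simp only [f, b2r]; split <;> norm_num
  calc _ ≤ √(Var[fun ω => polyVal d Q (f · ω); μ]) :=
        integral_abs_sub_integral_le_sqrt_variance (memLp_polyVal hf_meas hf_mem d Q)
    _ ≤ √(∑ v, cCoeff d Q v ^ 2) :=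
        Real.sqrt_le_sqrt (variance_polyVal_le hf_ind hf_meas hf_mem d Q)
    _ ≤ 2 * √(∑ v, cCoeff d Q v ^ 2) := le_mul_of_one_le_left (Real.sqrt_nonneg _) one_le_two

/-- **McDiarmid-type L¹ bound**: if `(Y_v)_{v ∈ V}` are independent `{0,1}`-valued
random variables and `P` is a `d`-homogeneous multilinear polynomial, then
`E|P(Y) − E P(Y)| ≤ 2 ‖P‖₂`. -/
theorem mcdiarmid_l1_bound
    {V : Type} [Fintype V] [DecidableEq V]
    {Ω : Type} [MeasurableSpace Ω] (μ : Measure Ω) [IsProbabilityMeasure μ]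
    (Y : V → Ω → Bool)
    (hmeas : ∀ v, Measurable (Y v))
    (hindep : ProbabilityTheory.iIndepFun Y μ)
    (d : ℕ) (hd : 1 ≤ d) (Q : Finset V → ℝ) :
    ∫ ω, |polyVal d Q (fun v => b2r (Y v ω))
          - ∫ ω', polyVal d Q (fun v => b2r (Y v ω')) ∂ μ| ∂ μ
      ≤ 2 * Real.sqrt (∑ v, cCoeff d Q v ^ 2) :=
  mcdiarmid_l1_bound_general μ Y hmeas hindep d Q

end
end

section
/- Let P be a d-homogeneous multilinear polynomial on ℝ^V and let f, g : [0,1] → [0,1]. Then for every x ∈ [0,1]^V and every 1 ≤ d' ≤ d, the polynomial P^{d',x} satisfies ‖P^{d',x}‖₂ ≤ binom(d−1, d'−1) · ‖P‖₂. -/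
open Finset

noncomputable section

/-- `‖P‖₁ = ∑_v c_v(P)`. -/
def polyNorm1 {V : Type} [Fintype V] [DecidableEq V] (d : ℕ) (Q : Finset V → ℝ) : ℝ :=
  ∑ v, cCoeff d Q v

/-- `‖P‖₂ = (∑_v c_v(P)²)^{1/2}`. -/
def polyNorm2 {V : Type} [Fintype V] [DecidableEq V] (d : ℕ) (Q : Finset V → ℝ) : ℝ :=
  Real.sqrt (∑ v, cCoeff d Q v ^ 2)

/-- `φ_{W,U}(x) = ∏_{w∈U}(1 − f(x_{N_w}) − g(x_{N_w})) · ∏_{w∈W∖U} g(x_{N_w})`. -/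
def phiWU {V : Type} [Fintype V] [DecidableEq V] (G : SimpleGraph V) [DecidableRel G.Adj]
    (f g : ℝ → ℝ) (x : V → ℝ) (W U : Finset V) : ℝ :=
  (∏ w ∈ U, (1 - f (nbrAvg G x w) - g (nbrAvg G x w))) * ∏ w ∈ W \ U, g (nbrAvg G x w)

/-- Coefficients of the `d'`-homogeneous polynomial `P^{d',x}`:
`P^{d',x}_U = ∑_{W : U ⊆ W, |W| = d} P_W φ_{W,U}(x)`. -/
def derivedCoeff {V : Type} [Fintype V] [DecidableEq V] (G : SimpleGraph V)
    [DecidableRel G.Adj] (f g : ℝ → ℝ) (d : ℕ) (Q : Finset V → ℝ) (x : V → ℝ)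
    (U : Finset V) : ℝ :=
  ∑ W ∈ (Finset.powersetCard d (Finset.univ : Finset V)).filter (fun W => U ⊆ W),
    Q W * phiWU G f g x W U

lemma nbrAvg_mem {V : Type} [Fintype V] (G : SimpleGraph V) [DecidableRel G.Adj]
    (hdeg : ∀ v : V, 0 < G.degree v) (x : V → ℝ) (hx : ∀ v, x v ∈ Set.Icc (0:ℝ) 1)
    (w : V) : nbrAvg G x w ∈ Set.Icc (0:ℝ) 1 := by
  have hd : (0:ℝ) < (G.degree w : ℝ) := by exact_mod_cast hdeg w
  rw [Set.mem_Icc, nbrAvg]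
  constructor
  · exact div_nonneg (Finset.sum_nonneg fun i _ => (hx i).1) hd.le
  · rw [div_le_one hd]
    calc ∑ u ∈ G.neighborFinset w, x u ≤ ∑ u ∈ G.neighborFinset w, 1 :=
          Finset.sum_le_sum fun i _ => (hx i).2
      _ = G.degree w := by rw [Finset.sum_const, SimpleGraph.degree]; simp

lemma count_subsets {V : Type} [Fintype V] [DecidableEq V] (W : Finset V) (v : V)
    (hv : v ∈ W) (d d' : ℕ) (hW : W.card = d) (hd' : 1 ≤ d') :
    ((Finset.powersetCard d' (Finset.univ : Finset V)).filter
        (fun U => v ∈ U ∧ U ⊆ W)).card = (d-1).choose (d'-1) := by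
  have h : ((Finset.powersetCard d' (Finset.univ : Finset V)).filter
        (fun U => v ∈ U ∧ U ⊆ W)).card
      = (Finset.powersetCard (d'-1) (W.erase v)).card := by
    apply Finset.card_bij' (fun U _ => U.erase v) (fun T _ => insert v T)
    · intro U hU
      simp only [mem_filter] at hU
      exact Finset.insert_erase hU.2.1
    · intro T hT
      rw [Finset.mem_powersetCard] at hT
      have hvT : v ∉ T := fun h => (Finset.notMem_erase v W) (hT.1 h)
      exact Finset.erase_insert hvT
    · intro U hU
      simp only [mem_filter, Finset.mem_powersetCard] at hU
      obtain ⟨⟨_, hcard⟩, hvU, hUW⟩ := hU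
      rw [Finset.mem_powersetCard]
      exact ⟨Finset.erase_subset_erase v hUW,
        by rw [Finset.card_erase_of_mem hvU, hcard]⟩
    · intro T hT
      rw [Finset.mem_powersetCard] at hT
      obtain ⟨hTW, hTc⟩ := hT
      have hvT : v ∉ T := fun h => (Finset.notMem_erase v W) (hTW h)
      simp only [mem_filter, Finset.mem_powersetCard]
      refine ⟨⟨Finset.subset_univ _, ?_⟩, Finset.mem_insert_self _ _, ?_⟩
      · rw [Finset.card_insert_of_notMem hvT, hTc]
        omega
      · exact Finset.insert_subset hv (hTW.trans (Finset.erase_subset v W))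
  rw [h, Finset.card_powersetCard, Finset.card_erase_of_mem hv, hW]

lemma abs_phi_le_one {V : Type} [Fintype V] [DecidableEq V] (G : SimpleGraph V)
    [DecidableRel G.Adj] (hdeg : ∀ v : V, 0 < G.degree v) (f g : ℝ → ℝ)
    (hf01 : ∀ a ∈ Set.Icc (0:ℝ) 1, f a ∈ Set.Icc (0:ℝ) 1)
    (hg01 : ∀ a ∈ Set.Icc (0:ℝ) 1, g a ∈ Set.Icc (0:ℝ) 1)
    (x : V → ℝ) (hx : ∀ v, x v ∈ Set.Icc (0:ℝ) 1) (W U : Finset V) :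
    |phiWU G f g x W U| ≤ 1 := by
  rw [phiWU, abs_mul]
  have h1 : |∏ w ∈ U, (1 - f (nbrAvg G x w) - g (nbrAvg G x w))| ≤ 1 := by
    rw [abs_prod]
    apply Finset.prod_le_one (fun i _ => abs_nonneg _)
    intro i _
    have hf := hf01 _ (nbrAvg_mem G hdeg x hx i)
    have hg := hg01 _ (nbrAvg_mem G hdeg x hx i)
    rw [abs_le]
    constructor <;> [linarith [hf.2, hg.2]; linarith [hf.1, hg.1]]
  have h2 : |∏ w ∈ W \ U, g (nbrAvg G x w)| ≤ 1 := by
    rw [abs_prod]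
    apply Finset.prod_le_one (fun i _ => abs_nonneg _)
    intro i _
    have hg := hg01 _ (nbrAvg_mem G hdeg x hx i)
    rw [abs_le]; constructor <;> linarith [hg.1, hg.2]
  calc _ ≤ 1 * 1 := mul_le_mul h1 h2 (abs_nonneg _) zero_le_one
    _ = 1 := mul_one 1

lemma cCoeff_bound {V : Type} [Fintype V] [DecidableEq V] (G : SimpleGraph V)
    [DecidableRel G.Adj] (hdeg : ∀ v : V, 0 < G.degree v) (f g : ℝ → ℝ)
    (hf01 : ∀ a ∈ Set.Icc (0:ℝ) 1, f a ∈ Set.Icc (0:ℝ) 1)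
    (hg01 : ∀ a ∈ Set.Icc (0:ℝ) 1, g a ∈ Set.Icc (0:ℝ) 1)
    (x : V → ℝ) (hx : ∀ v, x v ∈ Set.Icc (0:ℝ) 1)
    (d d' : ℕ) (hd' : 1 ≤ d') (hd'd : d' ≤ d) (Q : Finset V → ℝ) (v : V) :
    cCoeff d' (derivedCoeff G f g d Q x) v ≤ ((d-1).choose (d'-1) : ℝ) * cCoeff d Q v := by
  rw [cCoeff]
  have step1 : ∀ U ∈ (Finset.powersetCard d' (Finset.univ : Finset V)).filter
      (fun W => v ∈ W),
      |derivedCoeff G f g d Q x U| ≤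
      ∑ W ∈ (Finset.powersetCard d (Finset.univ : Finset V)).filter (fun W => U ⊆ W),
        |Q W| := by
    intro U _
    rw [derivedCoeff]
    refine (Finset.abs_sum_le_sum_abs _ _).trans (Finset.sum_le_sum fun W _ => ?_)
    rw [abs_mul]
    calc |Q W| * |phiWU G f g x W U| ≤ |Q W| * 1 :=
          mul_le_mul_of_nonneg_left
            (abs_phi_le_one G hdeg f g hf01 hg01 x hx W U) (abs_nonneg _)
      _ = |Q W| := mul_one _
  refine (Finset.sum_le_sum step1).trans ?_
  have hswap : ∑ U ∈ (Finset.powersetCard d' (Finset.univ : Finset V)).filter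
        (fun W => v ∈ W),
      ∑ W ∈ (Finset.powersetCard d (Finset.univ : Finset V)).filter (fun W => U ⊆ W),
        |Q W|
      = ∑ W ∈ (Finset.powersetCard d (Finset.univ : Finset V)).filter (fun W => v ∈ W),
        ∑ U ∈ (Finset.powersetCard d' (Finset.univ : Finset V)).filter
          (fun U => v ∈ U ∧ U ⊆ W), |Q W| := by
    apply Finset.sum_comm'
    intro U W
    simp only [mem_filter, Finset.mem_powersetCard]
    constructor
    · rintro ⟨⟨⟨-, hU⟩, hvU⟩, ⟨-, hW⟩, hUW⟩
      exact ⟨⟨⟨Finset.subset_univ _, hU⟩, hvU, hUW⟩, ⟨Finset.subset_univ _, hW⟩, hUW hvU⟩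
    · rintro ⟨⟨⟨-, hU⟩, hvU, hUW⟩, ⟨-, hW⟩, -⟩
      exact ⟨⟨⟨Finset.subset_univ _, hU⟩, hvU⟩, ⟨Finset.subset_univ _, hW⟩, hUW⟩
  rw [hswap, cCoeff, Finset.mul_sum]
  apply Finset.sum_le_sum
  intro W hW
  simp only [mem_filter, Finset.mem_powersetCard] at hW
  rw [Finset.sum_const, count_subsets W v hW.2 d d' hW.1.2 hd', nsmul_eq_mul]

/-- **Norm bound for the derived polynomials**: `‖P^{d',x}‖₂ ≤ C(d−1, d'−1) ‖P‖₂`. -/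
theorem derived_polynomial_norm_bound
    {V : Type} [Fintype V] [DecidableEq V]
    (G : SimpleGraph V) [DecidableRel G.Adj]
    (hdeg : ∀ v : V, 0 < G.degree v)
    (f g : ℝ → ℝ)
    (hf01 : ∀ a ∈ Set.Icc (0:ℝ) 1, f a ∈ Set.Icc (0:ℝ) 1)
    (hg01 : ∀ a ∈ Set.Icc (0:ℝ) 1, g a ∈ Set.Icc (0:ℝ) 1)
    (x : V → ℝ) (hx : ∀ v, x v ∈ Set.Icc (0:ℝ) 1)
    (d d' : ℕ) (hd' : 1 ≤ d') (hd'd : d' ≤ d) (Q : Finset V → ℝ) :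
    polyNorm2 d' (derivedCoeff G f g d Q x)
      ≤ ((d - 1).choose (d' - 1) : ℝ) * polyNorm2 d Q := by
  have hk : (0:ℝ) ≤ ((d - 1).choose (d' - 1) : ℝ) := Nat.cast_nonneg _
  have hc0 : ∀ v, 0 ≤ cCoeff d' (derivedCoeff G f g d Q x) v :=
    fun v => Finset.sum_nonneg fun _ _ => abs_nonneg _
  have h1 : ∑ v, cCoeff d' (derivedCoeff G f g d Q x) v ^ 2
      ≤ ∑ v, (((d - 1).choose (d' - 1) : ℝ) * cCoeff d Q v) ^ 2 :=
    Finset.sum_le_sum fun v _ => pow_le_pow_left₀ (hc0 v)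
      (cCoeff_bound G hdeg f g hf01 hg01 x hx d d' hd' hd'd Q v) 2
  rw [polyNorm2, polyNorm2]
  calc Real.sqrt (∑ v, cCoeff d' (derivedCoeff G f g d Q x) v ^ 2)
      ≤ Real.sqrt (∑ v, (((d - 1).choose (d' - 1) : ℝ) * cCoeff d Q v) ^ 2) :=
        Real.sqrt_le_sqrt h1
    _ = ((d - 1).choose (d' - 1) : ℝ) * Real.sqrt (∑ v, cCoeff d Q v ^ 2) := by
        have : ∑ v, (((d - 1).choose (d' - 1) : ℝ) * cCoeff d Q v) ^ 2
            = ((d - 1).choose (d' - 1) : ℝ) ^ 2 * ∑ v, cCoeff d Q v ^ 2 := by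
          rw [Finset.mul_sum]
          exact Finset.sum_congr rfl fun v _ => by ring
        rw [this, Real.sqrt_mul (sq_nonneg _), Real.sqrt_sq hk]

end
end
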